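/- arXiv:0711.0451 — 2 statements merged into one kernel-verified Lean document; each statement's English description precedes it below -/
import Mathlib

section
/- Let f ∈ L_p[0,1] (1 ≤ p < ∞) be self-similar of zero spectral order with 1 < k̂ < n, and assume f is not almost everywhere equal to a constant. Then f coincides almost everywhere with a nondecreasing function on [0,1] if and only if d_{k̂} > 0 and β_1 ≤ β_2 ≤ … ≤ β_{k̂−1} ≤ d_{k̂}β_1 + β_{k̂} ≤ d_{k̂}β_n + β_{k̂} ≤ β_{k̂+1} ≤ … ≤ β_n. -/
open MeasureTheory Set Filter
open scoped ENNReal NNReal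

/-- Breakpoints: `alphaOf a k = α_k = ∑_{i=1}^{k-1} a_i`, so `α_1 = 0`. -/
noncomputable def alphaOf (a : ℕ → ℝ) (k : ℕ) : ℝ := ∑ i ∈ Finset.Ico 1 k, a i

/-- The similarity operator `G`: on `(α_k, α_{k+1})` it takes the value
`β_k + d_k · f((x − α_k)/a_k)`, and `0` outside `⋃ (α_k, α_{k+1})`. -/
noncomputable def simOp (n : ℕ) (a d β : ℕ → ℝ) (f : ℝ → ℝ) : ℝ → ℝ :=
  fun x => ∑ k ∈ Finset.Icc 1 n,
    Set.indicator (Set.Ioo (alphaOf a k) (alphaOf a (k + 1)))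
      (fun y => β k + d k * f ((y - alphaOf a k) / a k)) x

/-!
Since only `d_k̂` is nonzero, a fixed point `f` of `G` equals `β_j` on `(α_j, α_{j+1})` for
`j ≠ k̂`, and `f (T x) = S (f x)` for the affine maps `T x = a_k̂ x + α_k̂` (of `[0,1]` onto
`[α_k̂, α_{k̂+1}]`) and `S y = d_k̂ y + β_k̂`. Hence `f` is a.e. equal to `S^m β_j` on each piece
`T^m (α_j, α_{j+1})`, `j ≠ k̂`. The pieces fill `[0,1]` up to a null set: up to countably many
points, what they miss lies in `T^m [0,1]`, of length `a_k̂^m`, for every `m`.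

So `f` agrees a.e. with a monotone function iff the piece values increase from left to right.
Comparing pieces of levels 0 and 1 gives the chain of inequalities, and for `d_k̂ < 0` the chain
forces all values to coincide, i.e. `f` is constant. Conversely, for `d_k̂ > 0` the chain makes
`S` an increasing map of `[β_1, β_n]` into `[β_{k̂-1}, β_{k̂+1}]`, and induction on the level
shows that the values are ordered like the pieces.
-/

section Cover

variable {α β ι : Type*} [MeasurableSpace α] {μ : Measure α}

lemma exists_mem_of_ae_imp {S : Set α} {p : α → Prop} (hS : μ S ≠ 0)
    (h : ∀ᵐ x ∂μ, x ∈ S → p x) : ∃ x ∈ S, p x := by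
  by_contra! hne
  have hnull : μ {x | ¬(x ∈ S → p x)} = 0 := ae_iff.1 h
  exact hS (measure_mono_null (fun x hx (hpx : x ∈ S → p x) => hne x hx (hpx hx)) hnull)

lemma le_of_monotoneOn_of_ae_eq [Preorder α] [Preorder β] {f g : α → β} {s S R : Set α}
    {v w : β} (hg : MonotoneOn g s) (hfg : f =ᵐ[μ.restrict s] g) (hSs : S ⊆ s) (hRs : R ⊆ s)
    (hS : μ S ≠ 0) (hR : μ R ≠ 0) (hSR : ∀ x ∈ S, ∀ y ∈ R, x ≤ y)
    (hv : ∀ᵐ x ∂μ, x ∈ S → f x = v) (hw : ∀ᵐ x ∂μ, x ∈ R → f x = w) : v ≤ w := by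
  have hfg' := ae_imp_of_ae_restrict hfg
  obtain ⟨x, hxS, hxv, hxg⟩ := exists_mem_of_ae_imp (p := fun x => f x = v ∧ f x = g x) hS <| by
    filter_upwards [hv, hfg'] with x h1 h2 hx using ⟨h1 hx, h2 (hSs hx)⟩
  obtain ⟨y, hyR, hyw, hyg⟩ := exists_mem_of_ae_imp (p := fun y => f y = w ∧ f y = g y) hR <| by
    filter_upwards [hw, hfg'] with y h1 h2 hy using ⟨h1 hy, h2 (hRs hy)⟩
  calc v = g x := hxv.symm.trans hxg
    _ ≤ g y := hg (hSs hxS) (hRs hyR) (hSR x hxS y hyR)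
    _ = w := hyg.symm.trans hyw

lemma ae_restrict_eq_of_cover [Countable ι] {I : Set ι} {P : ι → Set α} {v : ι → β}
    {f g : α → β} {s : Set α} (hs : MeasurableSet s) (hcover : μ (s \ ⋃ i ∈ I, P i) = 0)
    (hf : ∀ i ∈ I, ∀ᵐ x ∂μ, x ∈ P i → f x = v i) (hg : ∀ i ∈ I, ∀ x ∈ P i, g x = v i) :
    f =ᵐ[μ.restrict s] g := by
  rw [EventuallyEq, ae_restrict_iff' hs]
  have hcov : ∀ᵐ x ∂μ, x ∈ s → x ∈ ⋃ i ∈ I, P i :=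
    ae_iff.2 (measure_mono_null (fun _ hx => Classical.not_imp.1 hx) hcover)
  filter_upwards [hcov, (ae_ball_iff I.to_countable).2 hf] with x hxU hxf hxs
  obtain ⟨i, hi, hxi⟩ := mem_iUnion₂.1 (hxU hxs)
  rw [hxf i hi hxi, hg i hi x hxi]

end Cover

lemma exists_monotone_eq_of_pieces {α β ι : Type*} [LinearOrder α]
    [ConditionallyCompleteLinearOrder β] {I : Set ι} {P : ι → Set α} {v : ι → β}
    (hv : ∀ i ∈ I, ∀ j ∈ I, ∀ x ∈ P i, ∀ y ∈ P j, x ≤ y → v i ≤ v j)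
    (hl : BddBelow (v '' I)) (hu : BddAbove (v '' I)) :
    ∃ g : α → β, Monotone g ∧ ∀ i ∈ I, ∀ x ∈ P i, g x = v i := by
  -- on `⋃ i ∈ I, P i` the supremum is over a singleton: `hv` forces pieces through a common
  -- point to carry the same value
  set h : α → β := fun x => sSup (v '' {i | i ∈ I ∧ x ∈ P i})
  have hval : ∀ i ∈ I, ∀ x ∈ P i, h x = v i := by
    intro i hi x hx
    have : v '' {j | j ∈ I ∧ x ∈ P j} = {v i} := by
      refine eq_singleton_iff_unique_mem.2 ⟨⟨i, ⟨hi, hx⟩, rfl⟩, ?_⟩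
      rintro _ ⟨j, ⟨hj, hxj⟩, rfl⟩
      exact le_antisymm (hv j hj i hi x hxj x hx le_rfl) (hv i hi j hj x hx x hxj le_rfl)
    simp only [h, this, csSup_singleton]
  have hmono : MonotoneOn h (⋃ i ∈ I, P i) := by
    intro x hx y hy hxy
    obtain ⟨i, hi, hxi⟩ := mem_iUnion₂.1 hx
    obtain ⟨j, hj, hyj⟩ := mem_iUnion₂.1 hy
    rw [hval i hi x hxi, hval j hj y hyj]
    exact hv i hi j hj x hxi y hyj hxy
  have himage : h '' ⋃ i ∈ I, P i ⊆ v '' I := by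
    rintro _ ⟨x, hx, rfl⟩
    obtain ⟨i, hi, hxi⟩ := mem_iUnion₂.1 hx
    exact ⟨i, hi, (hval i hi x hxi).symm⟩
  obtain ⟨g, hg, hgh⟩ := hmono.exists_monotone_extension (hl.mono himage) (hu.mono himage)
  exact ⟨g, hg, fun i hi x hx => (hgh (mem_iUnion₂.2 ⟨i, hi, hx⟩)).symm.trans (hval i hi x hx)⟩

lemma ae_comp_sub_div {c A : ℝ} (hA : A ≠ 0) {p : ℝ → Prop} (h : ∀ᵐ y, p y) :
    ∀ᵐ x, p ((x - c) / A) := by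
  have hqmp : Measure.QuasiMeasurePreserving (fun x : ℝ => (x - c) / A) := by
    convert (Measure.quasiMeasurePreserving_smul volume (inv_ne_zero hA)).comp
      (measurePreserving_sub_right volume c).quasiMeasurePreserving using 1
    ext x; simp [div_eq_inv_mul]
  exact hqmp.ae h

namespace SelfSimilar

lemma mem_erase_Icc {n k j : ℕ} : j ∈ (Finset.Icc 1 n).erase k ↔ j ≠ k ∧ 1 ≤ j ∧ j ≤ n := by
  rw [Finset.mem_erase, Finset.mem_Icc]

section Breakpoints

variable {n k : ℕ} {a : ℕ → ℝ}

@[simp]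
lemma alphaOf_one (a : ℕ → ℝ) : alphaOf a 1 = 0 := by
  simp [alphaOf]

lemma alphaOf_add_one (a : ℕ → ℝ) (hk : 1 ≤ k) : alphaOf a (k + 1) = alphaOf a k + a k := by
  simp [alphaOf, Finset.sum_Ico_succ_top hk]

lemma alphaOf_eq_one (hsum : ∑ k ∈ Finset.Icc 1 n, a k = 1) : alphaOf a (n + 1) = 1 := by
  rwa [alphaOf, Finset.Ico_add_one_right_eq_Icc]

lemma exists_eq_alphaOf_or_mem_Ioo (hsum : ∑ k ∈ Finset.Icc 1 n, a k = 1) {y : ℝ}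
    (hy : y ∈ Icc (0 : ℝ) 1) :
    (∃ k, y = alphaOf a k) ∨ ∃ k ∈ Finset.Icc 1 n, y ∈ Ioo (alphaOf a k) (alphaOf a (k + 1)) := by
  rcases hy.2.eq_or_lt with rfl | hy1
  · exact Or.inl ⟨n + 1, (alphaOf_eq_one hsum).symm⟩
  have hy' : y ∈ Ico (alphaOf a (0 + 1)) (alphaOf a (n + 1)) := by
    rw [alphaOf_eq_one hsum, zero_add, alphaOf_one]; exact ⟨hy.1, hy1⟩
  obtain ⟨i, hi, hyi⟩ := mem_iUnion₂.1 (Ico_subset_biUnion_Ico n (fun i => alphaOf a (i + 1)) hy')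
  rcases hyi.1.eq_or_lt with heq | hlt
  · exact Or.inl ⟨i + 1, heq.symm⟩
  · exact Or.inr ⟨i + 1, Finset.mem_Icc.2 ⟨by omega, Finset.mem_range.1 hi⟩, hlt, hyi.2⟩

variable (ha : ∀ k ∈ Finset.Icc 1 n, 0 < a k)
include ha

lemma strictMonoOn_alphaOf : StrictMonoOn (alphaOf a) (Icc 1 (n + 1)) :=
  strictMonoOn_of_lt_add_one ordConnected_Icc fun k _ hk hk' => by
    rw [alphaOf_add_one a hk.1]
    linarith [ha k (Finset.mem_Icc.2 ⟨hk.1, by have := hk'.2; omega⟩)]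

lemma Ioo_alphaOf_subset (hsum : ∑ k ∈ Finset.Icc 1 n, a k = 1) (hk : k ∈ Finset.Icc 1 n) :
    Ioo (alphaOf a k) (alphaOf a (k + 1)) ⊆ Ioo 0 1 := by
  rw [Finset.mem_Icc] at hk
  rw [← alphaOf_one a, ← alphaOf_eq_one hsum]
  exact Ioo_subset_Ioo ((strictMonoOn_alphaOf ha).monotoneOn ⟨le_rfl, by omega⟩
    ⟨hk.1, by omega⟩ hk.1) ((strictMonoOn_alphaOf ha).monotoneOn ⟨by omega, by omega⟩
    ⟨by omega, le_rfl⟩ (by omega))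

lemma lt_of_mem_Ioo_alphaOf {i j : ℕ} (hi : 1 ≤ i) (hij : i < j) (hj : j ≤ n) {x y : ℝ}
    (hx : x ∈ Ioo (alphaOf a i) (alphaOf a (i + 1)))
    (hy : y ∈ Ioo (alphaOf a j) (alphaOf a (j + 1))) : x < y :=
  calc x < alphaOf a (i + 1) := hx.2
    _ ≤ alphaOf a j := (strictMonoOn_alphaOf ha).monotoneOn ⟨by omega, by omega⟩
        ⟨by omega, by omega⟩ hij
    _ < y := hy.1

lemma lt_one_of_mem_erase (hsum : ∑ k ∈ Finset.Icc 1 n, a k = 1) (hk : k ∈ Finset.Icc 1 n)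
    {j : ℕ} (hj : j ∈ (Finset.Icc 1 n).erase k) : a k < 1 := by
  rw [← hsum, ← Finset.add_sum_erase _ _ hk]
  exact lt_add_of_pos_right _ (Finset.sum_pos' (fun i hi => (ha i (Finset.mem_of_mem_erase hi)).le)
    ⟨j, hj, ha j (Finset.mem_of_mem_erase hj)⟩)

end Breakpoints

section Operator

variable {n k : ℕ} {a d β : ℕ → ℝ} {f : ℝ → ℝ}

lemma simOp_apply_of_mem (ha : ∀ k ∈ Finset.Icc 1 n, 0 < a k) (hk : k ∈ Finset.Icc 1 n) {x : ℝ}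
    (hx : x ∈ Ioo (alphaOf a k) (alphaOf a (k + 1))) :
    simOp n a d β f x = β k + d k * f ((x - alphaOf a k) / a k) := by
  rw [simOp, Finset.sum_eq_single_of_mem k hk fun j hj hjk => indicator_of_notMem (fun hxj => ?_) _,
    indicator_of_mem hx]
  rw [Finset.mem_Icc] at hj hk
  rcases lt_or_gt_of_ne hjk with h | h
  · exact lt_irrefl x (lt_of_mem_Ioo_alphaOf ha hj.1 h hk.2 hxj hx)
  · exact lt_irrefl x (lt_of_mem_Ioo_alphaOf ha hk.1 h hj.2 hx hxj)

lemma ae_eq_of_mem_Ioo_alphaOf (ha : ∀ k ∈ Finset.Icc 1 n, 0 < a k)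
    (hsum : ∑ k ∈ Finset.Icc 1 n, a k = 1)
    (hfix : f =ᵐ[volume.restrict (Icc (0 : ℝ) 1)] simOp n a d β f) (hk : k ∈ Finset.Icc 1 n) :
    ∀ᵐ x, x ∈ Ioo (alphaOf a k) (alphaOf a (k + 1)) →
      f x = β k + d k * f ((x - alphaOf a k) / a k) := by
  filter_upwards [ae_imp_of_ae_restrict hfix] with x hx hxk
  rw [hx (Ioo_subset_Icc_self (Ioo_alphaOf_subset ha hsum hk hxk)), simOp_apply_of_mem ha hk hxk]

end Operator

noncomputable def embed (a : ℕ → ℝ) (k : ℕ) (x : ℝ) : ℝ := a k * x + alphaOf a k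

noncomputable def piece (a : ℕ → ℝ) (k m j : ℕ) : Set ℝ :=
  (embed a k)^[m] '' Ioo (alphaOf a j) (alphaOf a (j + 1))

def pieceIndex (n k : ℕ) : Set (ℕ × ℕ) := {i | i.2 ∈ (Finset.Icc 1 n).erase k}

noncomputable def pieceValue (d β : ℕ → ℝ) (k m j : ℕ) : ℝ := (fun y => d k * y + β k)^[m] (β j)

section Pieces

variable {n k m j : ℕ} {a : ℕ → ℝ}

lemma strictMono_embed (hk : 0 < a k) : StrictMono (embed a k) := fun x y h => by
  simp only [embed]; gcongr

lemma embed_sub_div (hk : a k ≠ 0) (x : ℝ) : (embed a k x - alphaOf a k) / a k = x := by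
  rw [embed, add_sub_cancel_right, mul_div_cancel_left₀ _ hk]

lemma image_embed_Ioo (hk : 0 < a k) (s t : ℝ) :
    embed a k '' Ioo s t = Ioo (embed a k s) (embed a k t) :=
  image_affine_Ioo hk _ _ _

lemma image_embed_Ioo_zero_one (hk : 0 < a k) (hk1 : 1 ≤ k) :
    embed a k '' Ioo 0 1 = Ioo (alphaOf a k) (alphaOf a (k + 1)) := by
  rw [image_embed_Ioo hk, alphaOf_add_one a hk1]
  simp [embed, add_comm]

lemma iterate_embed_sub (m : ℕ) (x y : ℝ) :
    (embed a k)^[m] x - (embed a k)^[m] y = a k ^ m * (x - y) := by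
  induction m with
  | zero => simp
  | succ m ih =>
    simp only [Function.iterate_succ_apply', embed]
    linear_combination a k * ih

lemma volume_iterate_embed_image_Icc_le (hk : 0 < a k) (m : ℕ) :
    volume ((embed a k)^[m] '' Icc 0 1) ≤ ENNReal.ofReal (a k ^ m) :=
  calc volume ((embed a k)^[m] '' Icc 0 1)
      ≤ volume (Icc ((embed a k)^[m] 0) ((embed a k)^[m] 1)) :=
        measure_mono ((strictMono_embed hk).iterate m).monotone.image_Icc_subset
    _ = ENNReal.ofReal (a k ^ m) := by rw [Real.volume_Icc, iterate_embed_sub, sub_zero, mul_one]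

lemma piece_zero : piece a k 0 j = Ioo (alphaOf a j) (alphaOf a (j + 1)) :=
  image_id _

lemma piece_succ : piece a k (m + 1) j = embed a k '' piece a k m j := by
  rw [piece, piece, Function.iterate_succ', image_comp]

lemma piece_eq_Ioo (hk : 0 < a k) :
    piece a k m j = Ioo ((embed a k)^[m] (alphaOf a j)) ((embed a k)^[m] (alphaOf a (j + 1))) := by
  induction m with
  | zero => exact piece_zero
  | succ m ih =>
    rw [piece_succ, ih, image_embed_Ioo hk, Function.iterate_succ_apply',
      Function.iterate_succ_apply']

variable (ha : ∀ k ∈ Finset.Icc 1 n, 0 < a k) (hk : k ∈ Finset.Icc 1 n)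
include ha hk

lemma volume_piece_ne_zero (hj : j ∈ Finset.Icc 1 n) : volume (piece a k m j) ≠ 0 := by
  rw [piece_eq_Ioo (ha k hk), Real.volume_Ioo, Ne, ENNReal.ofReal_eq_zero, not_le, sub_pos]
  rw [Finset.mem_Icc] at hj
  exact (strictMono_embed (ha k hk)).iterate m
    (strictMonoOn_alphaOf ha ⟨hj.1, by omega⟩ ⟨by omega, by omega⟩ (lt_add_one j))

variable (hsum : ∑ k ∈ Finset.Icc 1 n, a k = 1)
include hsum

lemma piece_subset_Ioo (hj : j ∈ Finset.Icc 1 n) : piece a k m j ⊆ Ioo 0 1 := by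
  induction m with
  | zero => exact piece_zero.trans_subset (Ioo_alphaOf_subset ha hsum hj)
  | succ m ih =>
    rw [piece_succ]
    refine (image_mono ih).trans ?_
    rw [image_embed_Ioo_zero_one (ha k hk) (Finset.mem_Icc.1 hk).1]
    exact Ioo_alphaOf_subset ha hsum hk

lemma piece_succ_subset (hj : j ∈ Finset.Icc 1 n) :
    piece a k (m + 1) j ⊆ Ioo (alphaOf a k) (alphaOf a (k + 1)) := by
  rw [piece_succ, ← image_embed_Ioo_zero_one (ha k hk) (Finset.mem_Icc.1 hk).1]
  exact image_mono (piece_subset_Ioo ha hk hsum hj)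

lemma Icc_diff_iUnion_piece_subset (m : ℕ) :
    Icc 0 1 \ ⋃ i ∈ pieceIndex n k, piece a k i.1 i.2 ⊆
      range (fun i : ℕ × ℕ => (embed a k)^[i.1] (alphaOf a i.2)) ∪ (embed a k)^[m] '' Icc 0 1 := by
  induction m with
  | zero => exact fun x hx => Or.inr (by simpa using hx.1)
  | succ m ih =>
    intro x hx
    obtain hE | ⟨y, hy, rfl⟩ := ih hx
    · exact Or.inl hE
    obtain ⟨j, rfl⟩ | ⟨j, hj, hyj⟩ := exists_eq_alphaOf_or_mem_Ioo hsum hy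
    · exact Or.inl ⟨(m, j), rfl⟩
    by_cases hjk : j = k
    · rw [hjk, ← image_embed_Ioo_zero_one (ha k hk) (Finset.mem_Icc.1 hk).1] at hyj
      obtain ⟨z, hz, rfl⟩ := hyj
      exact Or.inr ⟨z, Ioo_subset_Icc_self hz, (Function.iterate_succ_apply _ _ _).symm⟩
    · have hmj : (m, j) ∈ pieceIndex n k := Finset.mem_erase.2 ⟨hjk, hj⟩
      exact absurd (mem_iUnion₂.2 ⟨(m, j), hmj, mem_image_of_mem _ hyj⟩) hx.2

lemma volume_Icc_diff_iUnion_piece (hak : a k < 1) :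
    volume (Icc 0 1 \ ⋃ i ∈ pieceIndex n k, piece a k i.1 i.2) = 0 := by
  have hE : volume (range fun i : ℕ × ℕ => (embed a k)^[i.1] (alphaOf a i.2)) = 0 :=
    (countable_range _).measure_zero _
  have hlim : Tendsto (fun m => ENNReal.ofReal (a k ^ m)) atTop (nhds 0) := by
    simpa using ENNReal.tendsto_ofReal (tendsto_pow_atTop_nhds_zero_of_lt_one (ha k hk).le hak)
  refine le_antisymm (ge_of_tendsto' hlim fun m => ?_) zero_le
  calc _ ≤ _ := measure_mono (Icc_diff_iUnion_piece_subset ha hk hsum m)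
    _ ≤ _ := measure_union_le _ _
    _ ≤ _ := by rw [hE, zero_add]; exact volume_iterate_embed_image_Icc_le (ha k hk) m

end Pieces

section Values

variable {n k m j : ℕ} {a d β : ℕ → ℝ} {f : ℝ → ℝ}

lemma pieceValue_succ : pieceValue d β k (m + 1) j = d k * pieceValue d β k m j + β k :=
  Function.iterate_succ_apply' _ _ _

lemma ae_eq_pieceValue (ha : ∀ k ∈ Finset.Icc 1 n, 0 < a k)
    (hsum : ∑ k ∈ Finset.Icc 1 n, a k = 1) (hk : k ∈ Finset.Icc 1 n)
    (hd0 : ∀ j ∈ Finset.Icc 1 n, j ≠ k → d j = 0)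
    (hfix : f =ᵐ[volume.restrict (Icc (0 : ℝ) 1)] simOp n a d β f)
    (hj : j ∈ (Finset.Icc 1 n).erase k) (m : ℕ) :
    ∀ᵐ x, x ∈ piece a k m j → f x = pieceValue d β k m j := by
  obtain ⟨hjk, hj⟩ := Finset.mem_erase.1 hj
  induction m with
  | zero =>
    filter_upwards [ae_eq_of_mem_Ioo_alphaOf ha hsum hfix hj] with x hx hxj
    rw [hx (piece_zero ▸ hxj), hd0 j hj hjk, zero_mul, add_zero]
    rfl
  | succ m ih =>
    filter_upwards [ae_eq_of_mem_Ioo_alphaOf ha hsum hfix hk,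
      ae_comp_sub_div (c := alphaOf a k) (ha k hk).ne' ih] with x hx hxτ hxm
    have hxk := piece_succ_subset ha hk hsum hj hxm
    rw [piece_succ] at hxm
    obtain ⟨y, hy, rfl⟩ := hxm
    rw [hx hxk, hxτ (by rwa [embed_sub_div (ha k hk).ne']), pieceValue_succ]
    ring

end Values

section Order

variable {n k : ℕ} {β : ℕ → ℝ}

lemma monotoneOn_of_chain (hlow : ∀ i : ℕ, 1 ≤ i → i + 1 ≤ k - 1 → β i ≤ β (i + 1))
    (hmid : β (k - 1) ≤ β (k + 1)) (hhigh : ∀ i : ℕ, k + 1 ≤ i → i + 1 ≤ n → β i ≤ β (i + 1)) :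
    MonotoneOn β ((Finset.Icc 1 n).erase k : Set ℕ) := by
  have h₁ : MonotoneOn β (Icc 1 (k - 1)) :=
    monotoneOn_of_le_add_one ordConnected_Icc fun i _ hi hi' => hlow i hi.1 hi'.2
  have h₂ : MonotoneOn β (Icc (k + 1) n) :=
    monotoneOn_of_le_add_one ordConnected_Icc fun i _ hi hi' => hhigh i hi.1 hi'.2
  intro i hi j hj hij
  rw [Finset.mem_coe, mem_erase_Icc] at hi hj
  rcases lt_or_gt_of_ne hi.1 with hik | hik <;> rcases lt_or_gt_of_ne hj.1 with hjk | hjk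
  · exact h₁ ⟨hi.2.1, by omega⟩ ⟨by omega, by omega⟩ hij
  · calc β i ≤ β (k - 1) := h₁ ⟨hi.2.1, by omega⟩ ⟨by omega, le_rfl⟩ (by omega)
      _ ≤ β (k + 1) := hmid
      _ ≤ β j := h₂ ⟨le_rfl, by omega⟩ ⟨hjk, hj.2.2⟩ hjk
  · omega
  · exact h₂ ⟨hik, hi.2.2⟩ ⟨by omega, hj.2.2⟩ hij

variable {d : ℕ → ℝ} (hlow : β (k - 1) ≤ d k * β 1 + β k) (hhigh : d k * β n + β k ≤ β (k + 1))
include hlow hhigh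

lemma mapsTo_Icc_of_chain (hd : 0 ≤ d k) :
    MapsTo (fun y => d k * y + β k) (Icc (β 1) (β n)) (Icc (β (k - 1)) (β (k + 1))) :=
  fun y hy => by
    have hS : Monotone (fun y => d k * y + β k) := fun y z h => by dsimp only; gcongr
    exact ⟨hlow.trans (hS hy.1), (hS hy.2).trans hhigh⟩

variable (hk1 : 1 < k) (hkn : k < n) (hβ : MonotoneOn β ((Finset.Icc 1 n).erase k : Set ℕ))
include hk1 hkn hβ

lemma pieceValue_eq_of_neg (hflat : d k * β 1 + β k ≤ d k * β n + β k) (hd : d k < 0) {j : ℕ}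
    (hj : j ∈ (Finset.Icc 1 n).erase k) (m : ℕ) : pieceValue d β k m j = β 1 := by
  have h1 : 1 ∈ (Finset.Icc 1 n).erase k := mem_erase_Icc.2 (by omega)
  have hn : n ∈ (Finset.Icc 1 n).erase k := mem_erase_Icc.2 (by omega)
  have hn1 : β n ≤ β 1 := by nlinarith
  have hconst : ∀ i ∈ (Finset.Icc 1 n).erase k, β i = β 1 := fun i hi =>
    le_antisymm ((hβ hi hn (mem_erase_Icc.1 hi).2.2).trans hn1) (hβ h1 hi (mem_erase_Icc.1 hi).2.1)
  have hfixed : d k * β 1 + β k = β 1 := by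
    have := hconst (k - 1) (mem_erase_Icc.2 (by omega))
    have := hconst (k + 1) (mem_erase_Icc.2 (by omega))
    have := hconst n hn
    linarith
  rw [pieceValue, hconst j hj]
  exact Function.iterate_fixed hfixed m

variable (hd : 0 ≤ d k)
include hd

lemma pieceValue_mem_Icc {j : ℕ} (hj : j ∈ (Finset.Icc 1 n).erase k) (m : ℕ) :
    pieceValue d β k m j ∈ Icc (β 1) (β n) := by
  have hjn := mem_erase_Icc.1 hj
  have hsub : Icc (β (k - 1)) (β (k + 1)) ⊆ Icc (β 1) (β n) :=
    Icc_subset_Icc (hβ (mem_erase_Icc.2 (by omega)) (mem_erase_Icc.2 (by omega)) (by omega))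
      (hβ (mem_erase_Icc.2 (by omega)) (mem_erase_Icc.2 (by omega)) (by omega))
  exact (((mapsTo_Icc_of_chain hlow hhigh hd).mono_right hsub).iterate m)
    ⟨hβ (mem_erase_Icc.2 (by omega)) hj hjn.2.1, hβ hj (mem_erase_Icc.2 (by omega)) hjn.2.2⟩

lemma pieceValue_succ_mem_Icc {j : ℕ} (hj : j ∈ (Finset.Icc 1 n).erase k) (m : ℕ) :
    pieceValue d β k (m + 1) j ∈ Icc (β (k - 1)) (β (k + 1)) := by
  rw [pieceValue_succ]
  exact mapsTo_Icc_of_chain hlow hhigh hd (pieceValue_mem_Icc hlow hhigh hk1 hkn hβ hd hj m)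

end Order

section Monotone

variable {n k : ℕ} {a d β : ℕ → ℝ}
variable (ha : ∀ k ∈ Finset.Icc 1 n, 0 < a k) (hsum : ∑ k ∈ Finset.Icc 1 n, a k = 1)
  (hk1 : 1 < k) (hkn : k < n)
include ha hsum hk1 hkn

lemma chain_of_monotoneOn {f g : ℝ → ℝ} (hd0 : ∀ j ∈ Finset.Icc 1 n, j ≠ k → d j = 0)
    (hfix : f =ᵐ[volume.restrict (Icc (0 : ℝ) 1)] simOp n a d β f)
    (hg : MonotoneOn g (Icc 0 1)) (hfg : f =ᵐ[volume.restrict (Icc (0 : ℝ) 1)] g) :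
    (∀ i : ℕ, 1 ≤ i → i + 1 ≤ k - 1 → β i ≤ β (i + 1)) ∧
    β (k - 1) ≤ d k * β 1 + β k ∧
    d k * β 1 + β k ≤ d k * β n + β k ∧
    d k * β n + β k ≤ β (k + 1) ∧
    (∀ i : ℕ, k + 1 ≤ i → i + 1 ≤ n → β i ≤ β (i + 1)) := by
  have hk : k ∈ Finset.Icc 1 n := Finset.mem_Icc.2 ⟨hk1.le, hkn.le⟩
  have hvalue : ∀ {l i m j}, i ∈ (Finset.Icc 1 n).erase k → j ∈ (Finset.Icc 1 n).erase k →
      (∀ x ∈ piece a k l i, ∀ y ∈ piece a k m j, x ≤ y) →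
      pieceValue d β k l i ≤ pieceValue d β k m j := fun hi hj hij =>
    le_of_monotoneOn_of_ae_eq hg hfg
      ((piece_subset_Ioo ha hk hsum (Finset.mem_of_mem_erase hi)).trans Ioo_subset_Icc_self)
      ((piece_subset_Ioo ha hk hsum (Finset.mem_of_mem_erase hj)).trans Ioo_subset_Icc_self)
      (volume_piece_ne_zero ha hk (Finset.mem_of_mem_erase hi))
      (volume_piece_ne_zero ha hk (Finset.mem_of_mem_erase hj)) hij
      (ae_eq_pieceValue ha hsum hk hd0 hfix hi _) (ae_eq_pieceValue ha hsum hk hd0 hfix hj _)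
  have hstep : ∀ i, 1 ≤ i → i + 1 ≤ n → i ≠ k → i + 1 ≠ k → β i ≤ β (i + 1) :=
    fun i h1 h2 h3 h4 => hvalue (l := 0) (m := 0) (mem_erase_Icc.2 (by omega))
      (mem_erase_Icc.2 (by omega))
      fun x hx y hy =>
      (lt_of_mem_Ioo_alphaOf ha h1 (lt_add_one i) h2 (piece_zero ▸ hx) (piece_zero ▸ hy)).le
  refine ⟨fun i h1 h2 => hstep i h1 (by omega) (by omega) (by omega), ?_, ?_, ?_,
    fun i h1 h2 => hstep i (by omega) h2 (by omega) (by omega)⟩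
  · exact hvalue (l := 0) (m := 1) (mem_erase_Icc.2 (by omega)) (mem_erase_Icc.2 (by omega))
      fun x hx y hy =>
      (lt_of_mem_Ioo_alphaOf ha (by omega) (by omega) hkn.le
        (Nat.sub_add_cancel hk1.le ▸ piece_zero ▸ hx)
        (piece_succ_subset ha hk hsum (Finset.mem_Icc.2 ⟨le_rfl, by omega⟩) hy)).le
  · refine hvalue (l := 1) (m := 1) (mem_erase_Icc.2 (by omega)) (mem_erase_Icc.2 (by omega))
      fun x hx y hy => ?_
    rw [piece_succ] at hx hy
    obtain ⟨x, hx, rfl⟩ := hx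
    obtain ⟨y, hy, rfl⟩ := hy
    exact (strictMono_embed (ha k hk) (lt_of_mem_Ioo_alphaOf ha le_rfl (by omega) le_rfl
      (piece_zero ▸ hx) (piece_zero ▸ hy))).le
  · exact hvalue (l := 1) (m := 0) (mem_erase_Icc.2 (by omega)) (mem_erase_Icc.2 (by omega))
      fun x hx y hy =>
      (lt_of_mem_Ioo_alphaOf ha hk1.le (lt_add_one k) (by omega)
        (piece_succ_subset ha hk hsum (Finset.mem_Icc.2 ⟨by omega, le_rfl⟩) hx)
        (piece_zero ▸ hy)).le

lemma pieceValue_le_of_mem_piece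
    (hlow : β (k - 1) ≤ d k * β 1 + β k) (hhigh : d k * β n + β k ≤ β (k + 1))
    (hβ : MonotoneOn β ((Finset.Icc 1 n).erase k : Set ℕ)) (hd : 0 ≤ d k)
    {l i m j : ℕ} (hi : i ∈ (Finset.Icc 1 n).erase k) (hj : j ∈ (Finset.Icc 1 n).erase k)
    {x y : ℝ} (hx : x ∈ piece a k l i) (hy : y ∈ piece a k m j) (hxy : x ≤ y) :
    pieceValue d β k l i ≤ pieceValue d β k m j := by
  have hk : k ∈ Finset.Icc 1 n := Finset.mem_Icc.2 ⟨hk1.le, hkn.le⟩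
  obtain ⟨hik, hi'⟩ := mem_erase_Icc.1 hi
  obtain ⟨hjk, hj'⟩ := mem_erase_Icc.1 hj
  induction m generalizing l x y with
  | zero =>
    rw [piece_zero] at hy
    cases l with
    | zero =>
      refine hβ hi hj (not_lt.1 fun hji => ?_)
      exact (lt_of_mem_Ioo_alphaOf ha hj'.1 hji hi'.2 hy (piece_zero ▸ hx)).not_ge hxy
    | succ l =>
      have hkj : k < j := lt_of_not_ge fun hjk' =>
        (lt_of_mem_Ioo_alphaOf ha hj'.1 (lt_of_le_of_ne hjk' hjk) hkn.le hy
          (piece_succ_subset ha hk hsum (Finset.mem_of_mem_erase hi) hx)).not_ge hxy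
      calc pieceValue d β k (l + 1) i ≤ β (k + 1) :=
            (pieceValue_succ_mem_Icc hlow hhigh hk1 hkn hβ hd hi l).2
        _ ≤ β j := hβ (mem_erase_Icc.2 (by omega)) hj hkj
  | succ m ih =>
    cases l with
    | zero =>
      have hik' : i < k := lt_of_not_ge fun hki =>
        (lt_of_mem_Ioo_alphaOf ha hk1.le (lt_of_le_of_ne hki (Ne.symm hik)) hi'.2
          (piece_succ_subset ha hk hsum (Finset.mem_of_mem_erase hj) hy)
          (piece_zero ▸ hx)).not_ge hxy
      calc pieceValue d β k 0 i ≤ β (k - 1) :=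
            hβ hi (mem_erase_Icc.2 (by omega)) (by omega)
        _ ≤ pieceValue d β k (m + 1) j :=
            (pieceValue_succ_mem_Icc hlow hhigh hk1 hkn hβ hd hj m).1
    | succ l =>
      rw [piece_succ] at hx hy
      obtain ⟨x, hx, rfl⟩ := hx
      obtain ⟨y, hy, rfl⟩ := hy
      rw [pieceValue_succ, pieceValue_succ]
      have := ih hx hy ((strictMono_embed (ha k hk)).le_iff_le.1 hxy)
      gcongr

end Monotone

end SelfSimilar

open SelfSimilar

theorem selfSimilar_zeroOrder_monotone_iff_mid_general
    (n : ℕ) (a d β : ℕ → ℝ)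
    (ha : ∀ k ∈ Finset.Icc 1 n, 0 < a k)
    (hsum : ∑ k ∈ Finset.Icc 1 n, a k = 1)
    (khat : ℕ) (hk : khat ∈ Finset.Icc 1 n)
    (hdk : d khat ≠ 0)
    (hd0 : ∀ k ∈ Finset.Icc 1 n, k ≠ khat → d k = 0)
    (f : ℝ → ℝ)
    (hfix : f =ᵐ[volume.restrict (Set.Icc (0:ℝ) 1)] simOp n a d β f)
    (hk1 : 1 < khat) (hkn : khat < n)
    (hnc : ¬ ∃ c : ℝ, f =ᵐ[volume.restrict (Set.Icc (0:ℝ) 1)] (fun _ => c)) :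
    (∃ g : ℝ → ℝ, MonotoneOn g (Set.Icc (0:ℝ) 1) ∧
        f =ᵐ[volume.restrict (Set.Icc (0:ℝ) 1)] g) ↔
      (0 < d khat ∧
       (∀ i : ℕ, 1 ≤ i → i + 1 ≤ khat - 1 → β i ≤ β (i + 1)) ∧
       β (khat - 1) ≤ d khat * β 1 + β khat ∧
       d khat * β 1 + β khat ≤ d khat * β n + β khat ∧
       d khat * β n + β khat ≤ β (khat + 1) ∧
       (∀ i : ℕ, khat + 1 ≤ i → i + 1 ≤ n → β i ≤ β (i + 1))) := by
  set I := pieceIndex n khat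
  have hpieces : ∀ i ∈ I, ∀ᵐ x, x ∈ piece a khat i.1 i.2 → f x = pieceValue d β khat i.1 i.2 :=
    fun i hi => ae_eq_pieceValue ha hsum hk hd0 hfix hi i.1
  have hcover : volume (Icc 0 1 \ ⋃ i ∈ I, piece a khat i.1 i.2) = 0 :=
    volume_Icc_diff_iUnion_piece ha hk hsum <| lt_one_of_mem_erase ha hsum hk (j := 1) <|
      mem_erase_Icc.2 (by omega)
  constructor
  · rintro ⟨g, hg, hfg⟩
    obtain ⟨H2, H3, H4, H5, H6⟩ := chain_of_monotoneOn ha hsum hk1 hkn hd0 hfix hg hfg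
    have hβ := monotoneOn_of_chain H2 (H3.trans (H4.trans H5)) H6
    refine ⟨hdk.lt_or_gt.resolve_left fun hneg => hnc ⟨β 1, ?_⟩, H2, H3, H4, H5, H6⟩
    exact ae_restrict_eq_of_cover measurableSet_Icc hcover hpieces fun i hi _ _ =>
      (pieceValue_eq_of_neg H3 H5 hk1 hkn hβ H4 hneg hi i.1).symm
  · rintro ⟨hd, H2, H3, H4, H5, H6⟩
    have hβ := monotoneOn_of_chain H2 (H3.trans (H4.trans H5)) H6
    have hbdd : (fun i : ℕ × ℕ => pieceValue d β khat i.1 i.2) '' I ⊆ Icc (β 1) (β n) := by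
      rintro _ ⟨i, hi, rfl⟩
      exact pieceValue_mem_Icc H3 H5 hk1 hkn hβ hd.le hi i.1
    obtain ⟨g, hg, hgv⟩ := exists_monotone_eq_of_pieces (I := I)
      (P := fun i => piece a khat i.1 i.2)
      (v := fun i => pieceValue d β khat i.1 i.2)
      (fun i hi j hj x hx y hy hxy =>
        pieceValue_le_of_mem_piece ha hsum hk1 hkn H3 H5 hβ hd.le hi hj hx hy hxy)
      (bddBelow_Icc.mono hbdd) (bddAbove_Icc.mono hbdd)
    exact ⟨g, hg.monotoneOn _, ae_restrict_eq_of_cover measurableSet_Icc hcover hpieces hgv⟩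

/-- monotonicity criterion for a nonconstant self-similar function of zero
spectral order with `1 < k̂ < n`. -/
theorem selfSimilar_zeroOrder_monotone_iff_mid
    (n : ℕ) (hn : 1 < n) (a d β : ℕ → ℝ)
    (ha : ∀ k ∈ Finset.Icc 1 n, 0 < a k)
    (hsum : ∑ k ∈ Finset.Icc 1 n, a k = 1)
    (p : ℝ≥0∞) (hp1 : 1 ≤ p) (hpt : p ≠ ⊤)
    (khat : ℕ) (hk : khat ∈ Finset.Icc 1 n)
    (hdk : d khat ≠ 0)
    (hd0 : ∀ k ∈ Finset.Icc 1 n, k ≠ khat → d k = 0)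
    (hβ : ∃ k ∈ Finset.Icc 1 n, β k ≠ 0)
    (hcontr : a khat * |d khat| ^ p.toReal < 1)
    (f : ℝ → ℝ) (hf : MemLp f p (volume.restrict (Set.Icc (0:ℝ) 1)))
    (hfix : f =ᵐ[volume.restrict (Set.Icc (0:ℝ) 1)] simOp n a d β f)
    (hk1 : 1 < khat) (hkn : khat < n)
    (hnc : ¬ ∃ c : ℝ, f =ᵐ[volume.restrict (Set.Icc (0:ℝ) 1)] (fun _ => c)) :
    (∃ g : ℝ → ℝ, MonotoneOn g (Set.Icc (0:ℝ) 1) ∧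
        f =ᵐ[volume.restrict (Set.Icc (0:ℝ) 1)] g) ↔
      (0 < d khat ∧
       (∀ i : ℕ, 1 ≤ i → i + 1 ≤ khat - 1 → β i ≤ β (i + 1)) ∧
       β (khat - 1) ≤ d khat * β 1 + β khat ∧
       d khat * β 1 + β khat ≤ d khat * β n + β khat ∧
       d khat * β n + β khat ≤ β (khat + 1) ∧
       (∀ i : ℕ, khat + 1 ≤ i → i + 1 ≤ n → β i ≤ β (i + 1))) :=
  selfSimilar_zeroOrder_monotone_iff_mid_general n a d β ha hsum khat hk hdk hd0 f hfix hk1 hkn hnc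
end

section
/- Let f ∈ L_p[0,1] (1 ≤ p < ∞) be the fixed point of the orientation-reversing-at-k̂ similarity operator G̃ of zero spectral order with 1 < k̂ < n, and assume f is not almost everywhere equal to a constant. Then f coincides almost everywhere with a nondecreasing function on [0,1] if and only if d_{k̂} < 0 and β_1 ≤ β_2 ≤ … ≤ β_{k̂−1} ≤ d_{k̂}β_n + β_{k̂} ≤ d_{k̂}β_1 + β_{k̂} ≤ β_{k̂+1} ≤ … ≤ β_n. -/
open MeasureTheory Set Filter
open scoped ENNReal NNReal

/-- The orientation-reversing-at-`k̂` similarity operator `G̃`: on `(α_k, α_{k+1})` with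
`k ≠ k̂` it takes the value `β_k + d_k · f((x − α_k)/a_k)`, and on `(α_{k̂}, α_{k̂+1})` the
value `β_{k̂} + d_{k̂} · f((α_{k̂+1} − x)/a_{k̂})`. -/
noncomputable def simOpRev (n khat : ℕ) (a d β : ℕ → ℝ) (f : ℝ → ℝ) : ℝ → ℝ :=
  fun x => ∑ k ∈ Finset.Icc 1 n,
    Set.indicator (Set.Ioo (alphaOf a k) (alphaOf a (k + 1)))
      (fun y => if k = khat then β k + d k * f ((alphaOf a (k + 1) - y) / a k)
        else β k + d k * f ((y - alphaOf a k) / a k)) x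

/-!
On each cell `(α_k, α_{k+1})` with `k ≠ k̂` the fixed point is the constant `β_k`, and on the
cell of `k̂` it satisfies `f (φ t) = ψ (f t)` with `φ t = α_{k̂+1} - a_{k̂} t`, which maps `(0,1)`
onto that cell reversing orientation, and `ψ y = β_{k̂} + d_{k̂} y`. Iterating, `f = ψ^m (β_k)`
a.e. on the piece `φ^m (α_k, α_{k+1})`, and these pieces cover `[0,1]` up to a null set `E`:
`E ⊆ {α_j} ∪ φ(E)` forces `|E| ≤ a_{k̂} |E|` with `a_{k̂} < 1`.

A monotone representative orders the values of pieces lying one left of the other; the pieces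
`(α_{k̂-1}, α_{k̂})`, `φ(α_n, 1)`, `φ(0, α_2)`, `(α_{k̂+1}, α_{k̂+2})` give the middle inequalities.
If `d_{k̂} > 0` and `g` is a monotone representative, then `f = ψ⁻¹ ∘ g ∘ φ` a.e., so `f` is a.e.
both nondecreasing and nonincreasing, hence constant. Conversely, when `d_{k̂} < 0` and the
inequalities hold, induction on the level shows that any two pieces are ordered together with
their values, so `f` is monotone on a set of full measure and extends to a monotone function.
-/

lemma volume_preimage_affine (c : ℝ) {s : ℝ} (hs : s ≠ 0) (E : Set ℝ) :
    volume ((fun x => c + s * x) ⁻¹' E) = ENNReal.ofReal |s⁻¹| * volume E := by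
  rw [show (fun x => c + s * x) ⁻¹' E = (s * ·) ⁻¹' ((c + ·) ⁻¹' E) from rfl,
    Real.volume_preimage_mul_left hs, measure_preimage_add]

lemma ae_comp_affine {P : ℝ → Prop} (c : ℝ) {s : ℝ} (hs : s ≠ 0) (h : ∀ᵐ x, P x) :
    ∀ᵐ t, P (c + s * t) := by
  rw [ae_iff] at h ⊢
  exact (volume_preimage_affine c hs {x | ¬P x}).trans (by rw [h, mul_zero])

lemma exists_mem_of_ae_imp_s17 {α : Type*} [MeasurableSpace α] {μ : Measure α} {s : Set α}
    {P : α → Prop} (hs : μ s ≠ 0) (h : ∀ᵐ x ∂μ, x ∈ s → P x) : ∃ x ∈ s, P x := by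
  by_contra! hP
  refine hs (measure_mono_null (fun x hx => ?_) (ae_iff.1 h))
  exact fun hPx => hP x hx (hPx hx)

lemma le_of_monotoneOn_of_ae_eq_s17 {α β : Type*} [MeasurableSpace α] [Preorder α] [Preorder β]
    {μ : Measure α} {s J J' : Set α} {f g : α → β} {c c' : β}
    (hg : MonotoneOn g s) (hfg : ∀ᵐ x ∂μ, x ∈ s → f x = g x)
    (hJ : ∀ᵐ x ∂μ, x ∈ J → f x = c) (hJ' : ∀ᵐ x ∂μ, x ∈ J' → f x = c')
    (hJs : J ⊆ s) (hJ's : J' ⊆ s) (hpos : μ J ≠ 0) (hpos' : μ J' ≠ 0)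
    (hle : J ⊆ lowerBounds J') : c ≤ c' := by
  obtain ⟨x, hx, hxc, hxg⟩ := exists_mem_of_ae_imp_s17 (P := fun x => f x = c ∧ f x = g x) hpos
    (by filter_upwards [hJ, hfg] with x h1 h2 hx using ⟨h1 hx, h2 (hJs hx)⟩)
  obtain ⟨y, hy, hyc, hyg⟩ := exists_mem_of_ae_imp_s17 (P := fun x => f x = c' ∧ f x = g x) hpos'
    (by filter_upwards [hJ', hfg] with x h1 h2 hx using ⟨h1 hx, h2 (hJ's hx)⟩)
  rw [← hxc, ← hyc, hxg, hyg]
  exact hg (hJs hx) (hJ's hy) (hle hx hy)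

lemma exists_ae_eq_const_of_monotoneOn_of_antitoneOn {α β : Type*} [MeasurableSpace α]
    [LinearOrder α] [PartialOrder β] [Nonempty β] {μ : Measure α} {s : Set α}
    (hs : MeasurableSet s) {g h : α → β} (hg : MonotoneOn g s) (hh : AntitoneOn h s)
    (hgh : g =ᵐ[μ.restrict s] h) : ∃ c, g =ᵐ[μ.restrict s] fun _ => c := by
  rcases eq_or_ne (μ.restrict s) 0 with hμ | hμ
  · exact ⟨Classical.arbitrary β, by simp only [hμ, ae_zero, EventuallyEq, eventually_bot]⟩
  have : (ae (μ.restrict s)).NeBot := ae_neBot.2 hμ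
  obtain ⟨x₀, hx₀, hx₀s⟩ := (hgh.and (ae_restrict_mem hs)).exists
  refine ⟨g x₀, ?_⟩
  filter_upwards [hgh, ae_restrict_mem hs] with x hx hxs
  rcases le_total x x₀ with hle | hle
  · exact le_antisymm (hg hxs hx₀s hle) (by rw [hx₀, hx]; exact hh hxs hx₀s hle)
  · exact le_antisymm (by rw [hx₀, hx]; exact hh hx₀s hxs hle) (hg hx₀s hxs hle)

lemma monotoneOn_setOf_eq_of_total {ι α β : Type*} [PartialOrder α] [Preorder β]
    {I : Set ι} {P : ι → Set α} {v : ι → β} {f : α → β}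
    (htot : ∀ i ∈ I, ∀ j ∈ I, i ≠ j →
      (P i ⊆ lowerBounds (P j) ∧ v i ≤ v j) ∨ (P j ⊆ lowerBounds (P i) ∧ v j ≤ v i)) :
    MonotoneOn f {x | ∃ i ∈ I, x ∈ P i ∧ f x = v i} := by
  rintro x ⟨i, hi, hxi, hfx⟩ y ⟨j, hj, hyj, hfy⟩ hxy
  rcases eq_or_ne i j with rfl | hij
  · rw [hfx, hfy]
  rcases htot i hi j hj hij with ⟨-, hv⟩ | ⟨hP, -⟩
  · rw [hfx, hfy]; exact hv
  · rw [le_antisymm hxy (hP hyj hxi)]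

lemma Antitone.image_subset_lowerBounds_image {α β : Type*} [Preorder α] [Preorder β]
    {φ : α → β} (hφ : Antitone φ) {s t : Set α} (h : s ⊆ lowerBounds t) :
    φ '' t ⊆ lowerBounds (φ '' s) := by
  rintro _ ⟨y, hy, rfl⟩ _ ⟨x, hx, rfl⟩
  exact hφ (h hx hy)

structure PosWeights (n : ℕ) (a : ℕ → ℝ) : Prop where
  pos : ∀ k ∈ Finset.Icc 1 n, 0 < a k
  sum_eq_one : ∑ k ∈ Finset.Icc 1 n, a k = 1

def cell (a : ℕ → ℝ) (k : ℕ) : Set ℝ := Ioo (alphaOf a k) (alphaOf a (k + 1))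

section Breakpoints

variable {n : ℕ} {a : ℕ → ℝ}

@[simp] lemma alphaOf_one (a : ℕ → ℝ) : alphaOf a 1 = 0 := by simp [alphaOf]

lemma alphaOf_succ (a : ℕ → ℝ) {k : ℕ} (hk : 1 ≤ k) : alphaOf a (k + 1) = alphaOf a k + a k :=
  Finset.sum_Ico_succ_top hk a

namespace PosWeights

variable (hw : PosWeights n a)
include hw

lemma one_le : 1 ≤ n := by
  by_contra! h
  simpa [Nat.lt_one_iff.1 h] using hw.sum_eq_one

lemma alphaOf_last : alphaOf a (n + 1) = 1 := by
  rw [alphaOf, ← hw.sum_eq_one, Finset.Ico_add_one_right_eq_Icc]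

lemma strictMonoOn_alphaOf : StrictMonoOn (alphaOf a) (Icc 1 (n + 1)) := by
  refine strictMonoOn_of_lt_add_one ordConnected_Icc fun k _ hk hk' => ?_
  rw [alphaOf_succ a hk.1]
  linarith [hw.pos k (Finset.mem_Icc.2 ⟨hk.1, by linarith [hk'.2]⟩)]

lemma alphaOf_le_alphaOf {i j : ℕ} (hi : 1 ≤ i) (hij : i ≤ j) (hj : j ≤ n + 1) :
    alphaOf a i ≤ alphaOf a j :=
  hw.strictMonoOn_alphaOf.monotoneOn ⟨hi, by omega⟩ ⟨by omega, hj⟩ hij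

lemma alphaOf_mem_Icc {k : ℕ} (hk1 : 1 ≤ k) (hk : k ≤ n + 1) : alphaOf a k ∈ Icc 0 1 :=
  ⟨alphaOf_one a ▸ hw.alphaOf_le_alphaOf le_rfl hk1 hk,
    hw.alphaOf_last ▸ hw.alphaOf_le_alphaOf hk1 hk le_rfl⟩

lemma lt_one {k : ℕ} (hk1 : 1 < k) (hkn : k ≤ n) : a k < 1 := by
  have h0 := hw.strictMonoOn_alphaOf (a := a) ⟨le_rfl, by omega⟩ ⟨hk1.le, by omega⟩ hk1
  have h1 := (hw.alphaOf_mem_Icc (k := k + 1) (by omega) (by omega)).2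
  rw [alphaOf_succ a hk1.le] at h1
  rw [alphaOf_one] at h0
  linarith

lemma cell_subset_Ioo {k : ℕ} (hk : k ∈ Finset.Icc 1 n) : cell a k ⊆ Ioo 0 1 := by
  rw [Finset.mem_Icc] at hk
  exact Ioo_subset_Ioo (hw.alphaOf_mem_Icc hk.1 (by omega)).1
    (hw.alphaOf_mem_Icc (by omega) (by omega)).2

lemma cell_subset_lowerBounds_cell {k k' : ℕ} (hk : 1 ≤ k) (hkk' : k < k') (hk' : k' ≤ n) :
    cell a k ⊆ lowerBounds (cell a k') := fun _ hx _ hy =>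
  (hx.2.trans_le (hw.alphaOf_le_alphaOf (by omega) hkk' (by omega))).trans hy.1 |>.le

lemma notMem_cell_of_ne {j k : ℕ} (hj : j ∈ Finset.Icc 1 n) (hk : k ∈ Finset.Icc 1 n)
    (hjk : j ≠ k) {x : ℝ} (hx : x ∈ cell a k) : x ∉ cell a j := by
  rw [Finset.mem_Icc] at hj hk
  intro hxj
  rcases lt_or_gt_of_ne hjk with h | h
  · linarith [hxj.2, hx.1, hw.alphaOf_le_alphaOf (by omega) h (by omega)]
  · linarith [hx.2, hxj.1, hw.alphaOf_le_alphaOf (by omega) h (by omega)]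

lemma exists_mem_cell {x : ℝ} (hx : x ∈ Icc 0 1) (hxα : x ∉ range (alphaOf a)) :
    ∃ k ∈ Finset.Icc 1 n, x ∈ cell a k := by
  set k := Nat.findGreatest (fun j => alphaOf a j < x) n
  have hx0 : 0 < x := hx.1.lt_of_ne fun h => hxα ⟨1, by simp [h]⟩
  have h1 : alphaOf a 1 < x := by simpa using hx0
  have hn : 1 ≤ n := hw.one_le
  have hkn : k ≤ n := Nat.findGreatest_le n
  refine ⟨k, Finset.mem_Icc.2 ⟨Nat.le_findGreatest hn h1, hkn⟩,
    Nat.findGreatest_spec (P := fun j => alphaOf a j < x) hn h1, ?_⟩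
  refine lt_of_le_of_ne ?_ fun h => hxα ⟨k + 1, h.symm⟩
  rcases hkn.lt_or_eq with hkn | hkn
  · exact not_lt.1 (Nat.findGreatest_is_greatest (Nat.lt_succ_self k) hkn)
  · rw [hkn, hw.alphaOf_last]; exact hx.2

end PosWeights

end Breakpoints

/-- The map `φ` of the header; `ofCellRev` is its inverse, the substitution made in `simOpRev`. -/
noncomputable def toCellRev (a : ℕ → ℝ) (k : ℕ) (t : ℝ) : ℝ := alphaOf a (k + 1) - a k * t

noncomputable def ofCellRev (a : ℕ → ℝ) (k : ℕ) (x : ℝ) : ℝ := (alphaOf a (k + 1) - x) / a k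

section CellRev

variable {n k : ℕ} {a : ℕ → ℝ}

lemma ofCellRev_toCellRev (h : a k ≠ 0) (t : ℝ) : ofCellRev a k (toCellRev a k t) = t := by
  simp only [ofCellRev, toCellRev]; field_simp; ring

lemma toCellRev_ofCellRev (h : a k ≠ 0) (x : ℝ) : toCellRev a k (ofCellRev a k x) = x := by
  simp only [ofCellRev, toCellRev]; field_simp; ring

lemma antitone_toCellRev (h : 0 ≤ a k) : Antitone (toCellRev a k) := fun _ _ hst => by
  simp only [toCellRev]; nlinarith

lemma ae_comp_toCellRev {P : ℝ → Prop} (h : a k ≠ 0) (hP : ∀ᵐ x, P x) :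
    ∀ᵐ t, P (toCellRev a k t) := by
  simpa [toCellRev, sub_eq_add_neg] using ae_comp_affine (alphaOf a (k + 1)) (neg_ne_zero.2 h) hP

lemma ofCellRev_eq_affine (x : ℝ) :
    ofCellRev a k x = alphaOf a (k + 1) / a k + -(a k)⁻¹ * x := by
  simp only [ofCellRev]; ring

lemma ae_comp_ofCellRev {P : ℝ → Prop} (h : a k ≠ 0) (hP : ∀ᵐ x, P x) :
    ∀ᵐ x, P (ofCellRev a k x) := by
  simpa [ofCellRev_eq_affine] using
    ae_comp_affine (alphaOf a (k + 1) / a k) (neg_ne_zero.2 (inv_ne_zero h)) hP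

lemma volume_image_toCellRev (h : 0 < a k) (E : Set ℝ) :
    volume (toCellRev a k '' E) = ENNReal.ofReal (a k) * volume E := by
  rw [image_eq_preimage_of_inverse (ofCellRev_toCellRev h.ne') (toCellRev_ofCellRev h.ne'),
    funext ofCellRev_eq_affine, volume_preimage_affine _ (neg_ne_zero.2 (inv_ne_zero h.ne')),
    inv_neg, inv_inv, abs_neg, abs_of_pos h]

lemma mapsTo_ofCellRev (hk : 1 ≤ k) (h : 0 < a k) : MapsTo (ofCellRev a k) (cell a k) (Ioo 0 1) :=
  fun x hx => by
  have := alphaOf_succ a hk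
  simp only [cell, mem_Ioo] at hx
  constructor
  · exact div_pos (by linarith) h
  · rw [ofCellRev, div_lt_one h]; linarith

lemma PosWeights.mapsTo_toCellRev (hw : PosWeights n a) (hk : k ∈ Finset.Icc 1 n) :
    MapsTo (toCellRev a k) (Ioo 0 1) (cell a k) := fun t ht => by
  have := alphaOf_succ a (Finset.mem_Icc.1 hk).1
  have := hw.pos k hk
  simp only [cell, toCellRev, mem_Ioo] at ht ⊢
  constructor <;> nlinarith

end CellRev

def piece (a : ℕ → ℝ) (khat m k : ℕ) : Set ℝ := (toCellRev a khat)^[m] '' cell a k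

noncomputable def pieceVal (d β : ℕ → ℝ) (khat m k : ℕ) : ℝ :=
  (fun y => β khat + d khat * y)^[m] (β k)

section Pieces

variable {n khat : ℕ} {a d β : ℕ → ℝ}

@[simp] lemma piece_zero (k : ℕ) : piece a khat 0 k = cell a k := image_id _

lemma piece_succ (m k : ℕ) : piece a khat (m + 1) k = toCellRev a khat '' piece a khat m k := by
  rw [piece, piece, Function.iterate_succ', image_comp]

@[simp] lemma pieceVal_zero (k : ℕ) : pieceVal d β khat 0 k = β k := rfl

lemma pieceVal_succ (m k : ℕ) :
    pieceVal d β khat (m + 1) k = β khat + d khat * pieceVal d β khat m k :=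
  Function.iterate_succ_apply' _ _ _

namespace PosWeights

variable (hw : PosWeights n a) (hkhat : khat ∈ Finset.Icc 1 n)
include hw hkhat

lemma piece_subset_Ioo (m : ℕ) {k : ℕ} (hk : k ∈ Finset.Icc 1 n) :
    piece a khat m k ⊆ Ioo 0 1 :=
  (image_mono (hw.cell_subset_Ioo hk)).trans
    (((hw.mapsTo_toCellRev hkhat).mono_right (hw.cell_subset_Ioo hkhat)).iterate m).image_subset

lemma piece_succ_subset_cell (m : ℕ) {k : ℕ} (hk : k ∈ Finset.Icc 1 n) :
    piece a khat (m + 1) k ⊆ cell a khat := by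
  rw [piece_succ]
  exact (image_mono (hw.piece_subset_Ioo hkhat m hk)).trans
    (hw.mapsTo_toCellRev hkhat).image_subset

lemma volume_piece_ne_zero (m : ℕ) {k : ℕ} (hk : k ∈ Finset.Icc 1 n) :
    volume (piece a khat m k) ≠ 0 := by
  induction m with
  | zero =>
    rw [piece_zero, cell, Real.volume_Ioo, alphaOf_succ a (Finset.mem_Icc.1 hk).1,
      add_sub_cancel_left]
    exact (ENNReal.ofReal_pos.2 (hw.pos k hk)).ne'
  | succ m ih =>
    rw [piece_succ, volume_image_toCellRev (hw.pos khat hkhat)]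
    exact mul_ne_zero (ENNReal.ofReal_pos.2 (hw.pos khat hkhat)).ne' ih

lemma cell_subset_lowerBounds_piece_succ {k : ℕ} (hk1 : 1 ≤ k) (hk : k < khat) (m : ℕ)
    {k' : ℕ} (hk' : k' ∈ Finset.Icc 1 n) : cell a k ⊆ lowerBounds (piece a khat (m + 1) k') :=
  fun _ hx _ hy => (hx.2.trans_le (hw.alphaOf_le_alphaOf (by omega) hk
    (by linarith [(Finset.mem_Icc.1 hkhat).2]))).le.trans
    (hw.piece_succ_subset_cell hkhat m hk' hy).1.le

lemma piece_succ_subset_lowerBounds_cell {k : ℕ} (hk : khat < k) (hkn : k ≤ n) (m : ℕ)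
    {k' : ℕ} (hk' : k' ∈ Finset.Icc 1 n) : piece a khat (m + 1) k' ⊆ lowerBounds (cell a k) :=
  fun _ hx _ hy => (hw.piece_succ_subset_cell hkhat m hk' hx).2.le.trans
    ((hw.alphaOf_le_alphaOf (by linarith [(Finset.mem_Icc.1 hkhat).1]) hk (by omega)).trans
      hy.1.le)

end PosWeights

end Pieces

namespace PosWeights

variable {n khat : ℕ} {a d β : ℕ → ℝ} {f : ℝ → ℝ} (hw : PosWeights n a)
include hw

lemma simOpRev_of_mem_cell {k : ℕ} (hk : k ∈ Finset.Icc 1 n) {x : ℝ} (hx : x ∈ cell a k) :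
    simOpRev n khat a d β f x = if k = khat then β k + d k * f (ofCellRev a k x)
      else β k + d k * f ((x - alphaOf a k) / a k) :=
  (Finset.sum_eq_single_of_mem k hk fun _ hj hjk =>
    indicator_of_notMem (hw.notMem_cell_of_ne hj hk hjk hx) _).trans (indicator_of_mem hx _)

lemma ae_eq_on_cell_of_fixed
    (hfix : f =ᵐ[volume.restrict (Icc 0 1)] simOpRev n khat a d β f)
    {k : ℕ} (hk : k ∈ Finset.Icc 1 n) :
    ∀ᵐ x, x ∈ cell a k → f x = if k = khat then β k + d k * f (ofCellRev a k x)
      else β k + d k * f ((x - alphaOf a k) / a k) := by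
  filter_upwards [(ae_restrict_iff' measurableSet_Icc).1 hfix] with x hx hxk
  rw [hx (Ioo_subset_Icc_self (hw.cell_subset_Ioo hk hxk)), hw.simOpRev_of_mem_cell hk hxk]

variable (hkhat : khat ∈ Finset.Icc 1 n)
include hkhat

lemma ae_eq_pieceVal
    (hcell : ∀ k ∈ (Finset.Icc 1 n).erase khat, ∀ᵐ x, x ∈ cell a k → f x = β k)
    (hrev : ∀ᵐ x, x ∈ cell a khat → f x = β khat + d khat * f (ofCellRev a khat x))
    (m : ℕ) {k : ℕ} (hk : k ∈ (Finset.Icc 1 n).erase khat) :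
    ∀ᵐ x, x ∈ piece a khat m k → f x = pieceVal d β khat m k := by
  have hA := hw.pos khat hkhat
  induction m with
  | zero => simpa using hcell k hk
  | succ m ih =>
    filter_upwards [hrev, ae_comp_ofCellRev hA.ne' ih] with x hx hx' hmem
    rw [piece_succ] at hmem
    obtain ⟨t, ht, rfl⟩ := hmem
    rw [ofCellRev_toCellRev hA.ne'] at hx hx'
    rw [pieceVal_succ, hx (hw.mapsTo_toCellRev hkhat
      (hw.piece_subset_Ioo hkhat m (Finset.mem_of_mem_erase hk) ht)), hx' ht]

lemma ae_exists_mem_piece (hA : a khat < 1) :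
    ∀ᵐ x, x ∈ Icc 0 1 → ∃ m, ∃ k ∈ (Finset.Icc 1 n).erase khat, x ∈ piece a khat m k := by
  set E := {x | x ∈ Icc (0 : ℝ) 1 ∧ ∀ m, ∀ k ∈ (Finset.Icc 1 n).erase khat, x ∉ piece a khat m k}
  have hpos := hw.pos khat hkhat
  have hsub : E ⊆ range (alphaOf a) ∪ ofCellRev a khat ⁻¹' E := by
    rintro x ⟨hx, hxE⟩
    refine (em (x ∈ range (alphaOf a))).imp id fun hxα => ?_
    obtain ⟨k, hk, hxk⟩ := hw.exists_mem_cell hx hxα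
    obtain rfl : k = khat := by
      by_contra hne
      exact hxE 0 k (Finset.mem_erase.2 ⟨hne, hk⟩) (by simpa using hxk)
    refine ⟨Ioo_subset_Icc_self (mapsTo_ofCellRev (Finset.mem_Icc.1 hk).1 hpos hxk),
      fun m k' hk' hm => hxE (m + 1) k' hk' ?_⟩
    rw [piece_succ, ← toCellRev_ofCellRev hpos.ne' x]
    exact mem_image_of_mem _ hm
  have hle : volume E ≤ ENNReal.ofReal (a khat) * volume E := calc
    volume E ≤ volume (range (alphaOf a)) + volume (ofCellRev a khat ⁻¹' E) :=
      (measure_mono hsub).trans (measure_union_le _ _)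
    _ = ENNReal.ofReal (a khat) * volume E := by
      rw [(countable_range _).measure_zero, zero_add, ← image_eq_preimage_of_inverse
        (ofCellRev_toCellRev hpos.ne') (toCellRev_ofCellRev hpos.ne'),
        volume_image_toCellRev hpos]
  have hfin : volume E ≠ ⊤ :=
    ((measure_mono fun x (hx : x ∈ E) => hx.1).trans_lt measure_Icc_lt_top).ne
  have hE : volume E = 0 := by
    by_contra h0
    refine (ENNReal.mul_lt_mul_left h0 hfin (ENNReal.ofReal_lt_one.2 hA)).not_ge ?_
    simpa using hle
  filter_upwards [measure_eq_zero_iff_ae_notMem.1 hE] with x hx hxI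
  by_contra! h
  exact hx ⟨hxI, h⟩

end PosWeights

def PieceLE (a d β : ℕ → ℝ) (khat : ℕ) (i j : ℕ × ℕ) : Prop :=
  piece a khat i.1 i.2 ⊆ lowerBounds (piece a khat j.1 j.2) ∧
    pieceVal d β khat i.1 i.2 ≤ pieceVal d β khat j.1 j.2

lemma mem_erase_Icc {n khat j : ℕ} (h1 : 1 ≤ j) (h2 : j ≤ n) (h3 : j ≠ khat) :
    j ∈ (Finset.Icc 1 n).erase khat :=
  Finset.mem_erase.2 ⟨h3, Finset.mem_Icc.2 ⟨h1, h2⟩⟩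

section Order

variable {n khat : ℕ} {a d β : ℕ → ℝ}

lemma PieceLE.succ (hd : d khat ≤ 0) (hA : 0 ≤ a khat) {m k m' k' : ℕ}
    (h : PieceLE a d β khat (m, k) (m', k')) : PieceLE a d β khat (m' + 1, k') (m + 1, k) := by
  refine ⟨?_, ?_⟩
  · rw [piece_succ, piece_succ]
    exact (antitone_toCellRev hA).image_subset_lowerBounds_image h.1
  · rw [pieceVal_succ, pieceVal_succ]
    exact add_le_add_right (mul_le_mul_of_nonpos_left h.2 hd) _

variable (hk1 : 1 < khat) (hkn : khat < n)
  (hβ : MonotoneOn β ((Finset.Icc 1 n).erase khat))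
  (hmaps : MapsTo (fun y => β khat + d khat * y) (Icc (β 1) (β n))
    (Icc (β (khat - 1)) (β (khat + 1))))
include hk1 hkn hβ hmaps

lemma pieceVal_mem_Icc (m : ℕ) {k : ℕ} (hk : k ∈ (Finset.Icc 1 n).erase khat) :
    pieceVal d β khat m k ∈ Icc (β 1) (β n) := by
  have hk' := Finset.mem_erase.1 hk
  rw [Finset.mem_Icc] at hk'
  have h1 : 1 ∈ (Finset.Icc 1 n).erase khat := mem_erase_Icc le_rfl (by omega) (by omega)
  have hn : n ∈ (Finset.Icc 1 n).erase khat := mem_erase_Icc (by omega) le_rfl (by omega)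
  cases m with
  | zero => exact ⟨hβ h1 hk hk'.2.1, hβ hk hn hk'.2.2⟩
  | succ m =>
    rw [pieceVal_succ]
    obtain ⟨hlo, hhi⟩ := hmaps (pieceVal_mem_Icc m hk)
    exact ⟨(hβ h1 (mem_erase_Icc (by omega) (by omega) (by omega)) (by omega)).trans hlo,
      hhi.trans (hβ (mem_erase_Icc (by omega) (by omega) (by omega)) hn (by omega))⟩

lemma pieceVal_succ_mem_Icc (m : ℕ) {k : ℕ} (hk : k ∈ (Finset.Icc 1 n).erase khat) :
    pieceVal d β khat (m + 1) k ∈ Icc (β (khat - 1)) (β (khat + 1)) := by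
  rw [pieceVal_succ]
  exact hmaps (pieceVal_mem_Icc hk1 hkn hβ hmaps m hk)

lemma PosWeights.pieceLE_cell_or_piece_succ (hw : PosWeights n a) {k : ℕ}
    (hk : k ∈ (Finset.Icc 1 n).erase khat) (m : ℕ) {k' : ℕ}
    (hk' : k' ∈ (Finset.Icc 1 n).erase khat) :
    PieceLE a d β khat (0, k) (m + 1, k') ∨ PieceLE a d β khat (m + 1, k') (0, k) := by
  have hkhat : khat ∈ Finset.Icc 1 n := Finset.mem_Icc.2 ⟨hk1.le, hkn.le⟩
  obtain ⟨hne, hkI⟩ := Finset.mem_erase.1 hk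
  have hkI' := Finset.mem_Icc.1 hkI
  have hval := pieceVal_succ_mem_Icc hk1 hkn hβ hmaps m hk'
  have hk'I := Finset.mem_of_mem_erase hk'
  rcases lt_or_gt_of_ne hne with h | h
  · have hsub := hw.cell_subset_lowerBounds_piece_succ hkhat hkI'.1 h m hk'I
    refine Or.inl ⟨by simpa using hsub, (hβ hk (mem_erase_Icc (by omega) (by omega) (by omega))
      (by omega)).trans hval.1⟩
  · have hsub := hw.piece_succ_subset_lowerBounds_cell hkhat h hkI'.2 m hk'I
    refine Or.inr ⟨by simpa using hsub, hval.2.trans (hβ (mem_erase_Icc (by omega) (by omega)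
      (by omega)) hk (by omega))⟩

lemma PosWeights.pieceLE_total (hw : PosWeights n a) (hd : d khat ≤ 0) (m m' : ℕ) {k k' : ℕ}
    (hk : k ∈ (Finset.Icc 1 n).erase khat) (hk' : k' ∈ (Finset.Icc 1 n).erase khat)
    (hne : (m, k) ≠ (m', k')) :
    PieceLE a d β khat (m, k) (m', k') ∨ PieceLE a d β khat (m', k') (m, k) := by
  have hA := (hw.pos khat (Finset.mem_Icc.2 ⟨hk1.le, hkn.le⟩)).le
  induction m generalizing m' k k' with
  | zero =>
    cases m' with
    | zero =>
      have hkI := Finset.mem_Icc.1 (Finset.mem_of_mem_erase hk)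
      have hkI' := Finset.mem_Icc.1 (Finset.mem_of_mem_erase hk')
      rcases lt_or_gt_of_ne (fun h => hne (h ▸ rfl) : k ≠ k') with h | h
      · exact Or.inl ⟨by simpa using hw.cell_subset_lowerBounds_cell hkI.1 h hkI'.2,
          hβ hk hk' h.le⟩
      · exact Or.inr ⟨by simpa using hw.cell_subset_lowerBounds_cell hkI'.1 h hkI.2,
          hβ hk' hk h.le⟩
    | succ m' => exact hw.pieceLE_cell_or_piece_succ hk1 hkn hβ hmaps hk m' hk'
  | succ m ih =>
    cases m' with
    | zero => exact (hw.pieceLE_cell_or_piece_succ hk1 hkn hβ hmaps hk' m hk).symm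
    | succ m' =>
      exact (ih m' hk hk' (by simpa using hne)).symm.imp (PieceLE.succ hd hA) (PieceLE.succ hd hA)

end Order

namespace PosWeights

variable {n khat : ℕ} {a d β : ℕ → ℝ} {f : ℝ → ℝ} (hw : PosWeights n a)
  (hkhat : khat ∈ Finset.Icc 1 n)
include hw hkhat

lemma exists_monotone_ae_eq (hk1 : 1 < khat) (hkn : khat < n) (hd : d khat ≤ 0)
    (hβ : MonotoneOn β ((Finset.Icc 1 n).erase khat))
    (hmaps : MapsTo (fun y => β khat + d khat * y) (Icc (β 1) (β n))
      (Icc (β (khat - 1)) (β (khat + 1))))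
    (hf : ∀ m, ∀ k ∈ (Finset.Icc 1 n).erase khat,
      ∀ᵐ x, x ∈ piece a khat m k → f x = pieceVal d β khat m k) :
    ∃ g : ℝ → ℝ, Monotone g ∧ f =ᵐ[volume.restrict (Icc 0 1)] g := by
  set I : Set (ℕ × ℕ) := {i | i.2 ∈ (Finset.Icc 1 n).erase khat}
  set S := {x | ∃ i ∈ I, x ∈ piece a khat i.1 i.2 ∧ f x = pieceVal d β khat i.1 i.2}
  have hmono : MonotoneOn f S := monotoneOn_setOf_eq_of_total
    fun i hi j hj hij => hw.pieceLE_total hk1 hkn hβ hmaps hd i.1 j.1 hi hj hij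
  have hbdd : f '' S ⊆ Icc (β 1) (β n) := by
    rintro _ ⟨x, ⟨i, hi, -, hfx⟩, rfl⟩
    rw [hfx]
    exact pieceVal_mem_Icc hk1 hkn hβ hmaps i.1 hi
  obtain ⟨g, hg, hfg⟩ := hmono.exists_monotone_extension
    ⟨β 1, fun _ hy => (hbdd hy).1⟩ ⟨β n, fun _ hy => (hbdd hy).2⟩
  have hall : ∀ᵐ x, ∀ i ∈ I, x ∈ piece a khat i.1 i.2 → f x = pieceVal d β khat i.1 i.2 := by
    refine ae_all_iff.2 fun i => ?_
    by_cases hi : i ∈ I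
    · filter_upwards [hf i.1 i.2 hi] with x hx _ using hx
    · exact Eventually.of_forall fun _ hi' => absurd hi' hi
  refine ⟨g, hg, (ae_restrict_iff' measurableSet_Icc).2 ?_⟩
  filter_upwards [hw.ae_exists_mem_piece hkhat (hw.lt_one hk1 hkn.le), hall] with x hcov hall hx
  obtain ⟨m, k, hk, hxm⟩ := hcov hx
  exact hfg ⟨(m, k), hk, hxm, hall (m, k) hk hxm⟩

variable {g : ℝ → ℝ} (hg : MonotoneOn g (Icc 0 1))
  (hfg : f =ᵐ[volume.restrict (Icc 0 1)] g)
include hg hfg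

lemma pieceVal_le_of_subset_lowerBounds
    (hf : ∀ m, ∀ k ∈ (Finset.Icc 1 n).erase khat,
      ∀ᵐ x, x ∈ piece a khat m k → f x = pieceVal d β khat m k)
    {m k m' k' : ℕ} (hk : k ∈ (Finset.Icc 1 n).erase khat)
    (hk' : k' ∈ (Finset.Icc 1 n).erase khat)
    (hle : piece a khat m k ⊆ lowerBounds (piece a khat m' k')) :
    pieceVal d β khat m k ≤ pieceVal d β khat m' k' :=
  le_of_monotoneOn_of_ae_eq_s17 hg ((ae_restrict_iff' measurableSet_Icc).1 hfg) (hf m k hk)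
    (hf m' k' hk') ((hw.piece_subset_Ioo hkhat m (Finset.mem_of_mem_erase hk)).trans
      Ioo_subset_Icc_self) ((hw.piece_subset_Ioo hkhat m' (Finset.mem_of_mem_erase hk')).trans
      Ioo_subset_Icc_self) (hw.volume_piece_ne_zero hkhat m (Finset.mem_of_mem_erase hk))
    (hw.volume_piece_ne_zero hkhat m' (Finset.mem_of_mem_erase hk')) hle

lemma exists_ae_eq_const_of_pos
    (hrev : ∀ᵐ x, x ∈ cell a khat → f x = β khat + d khat * f (ofCellRev a khat x))
    (hd : 0 < d khat) : ∃ c : ℝ, f =ᵐ[volume.restrict (Icc 0 1)] fun _ => c := by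
  have hA := hw.pos khat hkhat
  have hmaps : MapsTo (toCellRev a khat) (Ioo 0 1) (Icc 0 1) := fun t ht =>
    Ioo_subset_Icc_self (hw.cell_subset_Ioo hkhat (hw.mapsTo_toCellRev hkhat ht))
  rw [← Measure.restrict_congr_set Ioo_ae_eq_Icc] at hfg ⊢
  set h : ℝ → ℝ := fun t => (g (toCellRev a khat t) - β khat) / d khat
  have hanti : AntitoneOn h (Ioo 0 1) := fun s hs t ht hst =>
    div_le_div_of_nonneg_right (sub_le_sub_right
      (hg (hmaps ht) (hmaps hs) (antitone_toCellRev hA.le hst)) _) hd.le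
  have hgh : g =ᵐ[volume.restrict (Ioo 0 1)] h := by
    have hfg' := (ae_restrict_iff' measurableSet_Ioo).1 hfg
    filter_upwards [ae_restrict_mem measurableSet_Ioo, hfg,
      ae_restrict_of_ae (ae_comp_toCellRev hA.ne' hrev),
      ae_restrict_of_ae (ae_comp_toCellRev hA.ne' hfg')] with t ht hft hrevt hfgt
    rw [ofCellRev_toCellRev hA.ne'] at hrevt
    rw [← hft, eq_div_iff hd.ne', ← hfgt (hw.cell_subset_Ioo hkhat (hw.mapsTo_toCellRev hkhat ht)),
      hrevt (hw.mapsTo_toCellRev hkhat ht)]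
    ring
  obtain ⟨c, hc⟩ := exists_ae_eq_const_of_monotoneOn_of_antitoneOn measurableSet_Ioo
    (hg.mono Ioo_subset_Icc_self) hanti hgh
  exact ⟨c, hfg.trans hc⟩

end PosWeights

lemma monotoneOn_erase_of_le_succ {n khat : ℕ} {β : ℕ → ℝ}
    (hlo : ∀ i, 1 ≤ i → i + 1 ≤ khat - 1 → β i ≤ β (i + 1))
    (hmid : β (khat - 1) ≤ β (khat + 1))
    (hhi : ∀ i, khat + 1 ≤ i → i + 1 ≤ n → β i ≤ β (i + 1)) :
    MonotoneOn β ((Finset.Icc 1 n).erase khat) := by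
  have hlo' : MonotoneOn β (Icc 1 (khat - 1)) :=
    monotoneOn_of_le_add_one ordConnected_Icc fun i _ hi hi' => hlo i hi.1 hi'.2
  have hhi' : MonotoneOn β (Icc (khat + 1) n) :=
    monotoneOn_of_le_add_one ordConnected_Icc fun i _ hi hi' => hhi i hi.1 hi'.2
  intro i hi j hj hij
  simp only [Finset.mem_coe, Finset.mem_erase, Finset.mem_Icc] at hi hj
  rcases lt_or_gt_of_ne hi.1 with hik | hik <;> rcases lt_or_gt_of_ne hj.1 with hjk | hjk
  · exact hlo' ⟨hi.2.1, by omega⟩ ⟨by omega, by omega⟩ hij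
  · exact (hlo' ⟨hi.2.1, by omega⟩ ⟨by omega, le_rfl⟩ (by omega)).trans
      (hmid.trans (hhi' ⟨le_rfl, by omega⟩ ⟨by omega, hj.2.2⟩ (by omega)))
  · omega
  · exact hhi' ⟨by omega, hi.2.2⟩ ⟨by omega, hj.2.2⟩ hij

lemma PosWeights.beta_chain_of_pieceVal_le {n khat : ℕ} {a d β : ℕ → ℝ} (hw : PosWeights n a)
    (hk1 : 1 < khat) (hkn : khat < n)
    (hle : ∀ m k m' k', k ∈ (Finset.Icc 1 n).erase khat → k' ∈ (Finset.Icc 1 n).erase khat →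
      piece a khat m k ⊆ lowerBounds (piece a khat m' k') →
      pieceVal d β khat m k ≤ pieceVal d β khat m' k') :
    (∀ i : ℕ, 1 ≤ i → i + 1 ≤ khat - 1 → β i ≤ β (i + 1)) ∧
      β (khat - 1) ≤ d khat * β n + β khat ∧
      d khat * β n + β khat ≤ d khat * β 1 + β khat ∧
      d khat * β 1 + β khat ≤ β (khat + 1) ∧
      (∀ i : ℕ, khat + 1 ≤ i → i + 1 ≤ n → β i ≤ β (i + 1)) := by
  have hkhat : khat ∈ Finset.Icc 1 n := Finset.mem_Icc.2 ⟨hk1.le, hkn.le⟩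
  have hA := hw.pos khat hkhat
  have hVI : ∀ j, 1 ≤ j → j ≤ n → j ∈ Finset.Icc 1 n := fun j h1 h2 => Finset.mem_Icc.2 ⟨h1, h2⟩
  have hcells : ∀ i, 1 ≤ i → i + 1 ≤ n → i ≠ khat → i + 1 ≠ khat → β i ≤ β (i + 1) :=
    fun i h1 h2 h3 h4 => by
      simpa using hle 0 i 0 (i + 1) (mem_erase_Icc h1 (by omega) h3)
        (mem_erase_Icc (by omega) h2 h4)
        (by simpa using hw.cell_subset_lowerBounds_cell h1 (Nat.lt_succ_self i) h2)
  have hpiece_one : ∀ k, piece a khat 1 k = toCellRev a khat '' cell a k := fun k => by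
    rw [piece_succ, piece_zero]
  have hval_one : ∀ k, pieceVal d β khat 1 k = d khat * β k + β khat := fun k => by
    rw [pieceVal_succ, pieceVal_zero, add_comm]
  refine ⟨fun i h1 h2 => hcells i h1 (by omega) (by omega) (by omega), ?_, ?_, ?_,
    fun i h1 h2 => hcells i (by omega) h2 (by omega) (by omega)⟩
  · simpa [hval_one] using hle 0 (khat - 1) 1 n (mem_erase_Icc (by omega) (by omega) (by omega))
      (mem_erase_Icc (by omega) le_rfl (by omega)) (by
        simpa using hw.cell_subset_lowerBounds_piece_succ hkhat (k := khat - 1) (by omega)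
          (by omega) 0 (hVI n (by omega) le_rfl))
  · simpa [hval_one] using hle 1 n 1 1 (mem_erase_Icc (by omega) le_rfl (by omega))
      (mem_erase_Icc le_rfl (by omega) (by omega)) (by
        simpa only [hpiece_one] using (antitone_toCellRev hA.le).image_subset_lowerBounds_image
          (hw.cell_subset_lowerBounds_cell le_rfl (by omega : 1 < n) le_rfl))
  · simpa [hval_one] using hle 1 1 0 (khat + 1) (mem_erase_Icc le_rfl (by omega) (by omega))
      (mem_erase_Icc (by omega) (by omega) (by omega)) (by
        simpa using hw.piece_succ_subset_lowerBounds_cell hkhat (Nat.lt_succ_self khat)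
          (by omega) 0 (hVI 1 le_rfl (by omega)))

theorem selfSimilarRev_zeroOrder_monotone_iff_mid_general
    (n : ℕ) (a d β : ℕ → ℝ)
    (ha : ∀ k ∈ Finset.Icc 1 n, 0 < a k)
    (hsum : ∑ k ∈ Finset.Icc 1 n, a k = 1)
    (khat : ℕ)
    (hdk : d khat ≠ 0)
    (hd0 : ∀ k ∈ Finset.Icc 1 n, k ≠ khat → d k = 0)
    (f : ℝ → ℝ)
    (hfix : f =ᵐ[volume.restrict (Set.Icc (0:ℝ) 1)] simOpRev n khat a d β f)
    (hk1 : 1 < khat) (hkn : khat < n)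
    (hnc : ¬ ∃ c : ℝ, f =ᵐ[volume.restrict (Set.Icc (0:ℝ) 1)] (fun _ => c)) :
    (∃ g : ℝ → ℝ, MonotoneOn g (Set.Icc (0:ℝ) 1) ∧
        f =ᵐ[volume.restrict (Set.Icc (0:ℝ) 1)] g) ↔
      (d khat < 0 ∧
       (∀ i : ℕ, 1 ≤ i → i + 1 ≤ khat - 1 → β i ≤ β (i + 1)) ∧
       β (khat - 1) ≤ d khat * β n + β khat ∧
       d khat * β n + β khat ≤ d khat * β 1 + β khat ∧
       d khat * β 1 + β khat ≤ β (khat + 1) ∧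
       (∀ i : ℕ, khat + 1 ≤ i → i + 1 ≤ n → β i ≤ β (i + 1))) := by
  have hw : PosWeights n a := ⟨ha, hsum⟩
  have hkhat : khat ∈ Finset.Icc 1 n := Finset.mem_Icc.2 ⟨hk1.le, hkn.le⟩
  have hcell : ∀ k ∈ (Finset.Icc 1 n).erase khat, ∀ᵐ x, x ∈ cell a k → f x = β k :=
    fun k hk => by
      obtain ⟨hne, hkI⟩ := Finset.mem_erase.1 hk
      simpa [hne, hd0 k hkI hne] using hw.ae_eq_on_cell_of_fixed hfix hkI
  have hrev : ∀ᵐ x, x ∈ cell a khat → f x = β khat + d khat * f (ofCellRev a khat x) := by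
    simpa using hw.ae_eq_on_cell_of_fixed hfix hkhat
  have hpieces := hw.ae_eq_pieceVal hkhat hcell hrev
  constructor
  · rintro ⟨g, hg, hfg⟩
    refine ⟨(lt_or_gt_of_ne hdk).resolve_right fun hd =>
      hnc (hw.exists_ae_eq_const_of_pos hkhat hg hfg hrev hd), ?_⟩
    exact hw.beta_chain_of_pieceVal_le hk1 hkn fun m k m' k' hk hk' =>
      hw.pieceVal_le_of_subset_lowerBounds hkhat hg hfg hpieces hk hk'
  · rintro ⟨hd, hlo, hmid₁, hmid₂, hmid₃, hhi⟩
    have hmaps : MapsTo (fun y => β khat + d khat * y) (Icc (β 1) (β n))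
        (Icc (β (khat - 1)) (β (khat + 1))) := fun y hy =>
      ⟨by nlinarith [hy.2], by nlinarith [hy.1]⟩
    obtain ⟨g, hg, hfg⟩ := hw.exists_monotone_ae_eq hkhat hk1 hkn hd.le
      (monotoneOn_erase_of_le_succ hlo (by linarith) hhi) hmaps hpieces
    exact ⟨g, hg.monotoneOn _, hfg⟩

/-- monotonicity criterion for a nonconstant fixed point of the
orientation-reversing-at-`k̂` similarity operator of zero spectral order, `1 < k̂ < n`. -/
theorem selfSimilarRev_zeroOrder_monotone_iff_mid
    (n : ℕ) (hn : 1 < n) (a d β : ℕ → ℝ)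
    (ha : ∀ k ∈ Finset.Icc 1 n, 0 < a k)
    (hsum : ∑ k ∈ Finset.Icc 1 n, a k = 1)
    (p : ℝ≥0∞) (hp1 : 1 ≤ p) (hpt : p ≠ ⊤)
    (khat : ℕ) (hk : khat ∈ Finset.Icc 1 n)
    (hdk : d khat ≠ 0)
    (hd0 : ∀ k ∈ Finset.Icc 1 n, k ≠ khat → d k = 0)
    (hβ : ∃ k ∈ Finset.Icc 1 n, β k ≠ 0)
    (hcontr : a khat * |d khat| ^ p.toReal < 1)
    (f : ℝ → ℝ) (hf : MemLp f p (volume.restrict (Set.Icc (0:ℝ) 1)))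
    (hfix : f =ᵐ[volume.restrict (Set.Icc (0:ℝ) 1)] simOpRev n khat a d β f)
    (hk1 : 1 < khat) (hkn : khat < n)
    (hnc : ¬ ∃ c : ℝ, f =ᵐ[volume.restrict (Set.Icc (0:ℝ) 1)] (fun _ => c)) :
    (∃ g : ℝ → ℝ, MonotoneOn g (Set.Icc (0:ℝ) 1) ∧
        f =ᵐ[volume.restrict (Set.Icc (0:ℝ) 1)] g) ↔
      (d khat < 0 ∧
       (∀ i : ℕ, 1 ≤ i → i + 1 ≤ khat - 1 → β i ≤ β (i + 1)) ∧
       β (khat - 1) ≤ d khat * β n + β khat ∧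
       d khat * β n + β khat ≤ d khat * β 1 + β khat ∧
       d khat * β 1 + β khat ≤ β (khat + 1) ∧
       (∀ i : ℕ, khat + 1 ≤ i → i + 1 ≤ n → β i ≤ β (i + 1))) :=
  selfSimilarRev_zeroOrder_monotone_iff_mid_general n a d β ha hsum khat hdk hd0 f hfix hk1 hkn hnc
end
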